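/- arXiv:2207.03388 — 2 statements merged into one kernel-verified Lean document; each statement's English description precedes it below -/
import Mathlib

section
/- Let A be a real m×n matrix with m ≥ n, rank(A) = n, all rows nonzero, and Ax = b. Fix x_0 ∈ ℝ^n, k ∈ ℕ, and ε > 0. Suppose that no choice of at most k successive projections starting from x_0 produces the exact solution x (i.e., for every index sequence ω ∈ {1,…,m}^k and every 0 ≤ j ≤ k one has x_j(ω) ≠ x). Then E[ log(‖x_k − x‖/‖x_0 − x‖) ] ≤ (k/2)·log(1 − ε²/‖A‖_F²) · (1/k)·Σ_{i=0}^{k−1} P( ‖A x_i − b‖/‖x_i − x‖ ≥ ε ), where E and P denote expectation and probability for the random Kaczmarz process of length k, i.e., the weighted average over all index sequences ω ∈ {1,…,m}^k with weight ∏_{j=1}^{k} ‖a_{ω_j}‖²/‖A‖_F². -/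
noncomputable section

/-- The `i`-th row of `A` as a vector in Euclidean space. -/
def rowv {m n : ℕ} (A : Matrix (Fin m) (Fin n) ℝ) (i : Fin m) : EuclideanSpace ℝ (Fin n) :=
  WithLp.toLp 2 (fun j => A i j)

/-- Matrix-vector multiplication, landing in Euclidean space. -/
def mulV {m n : ℕ} (A : Matrix (Fin m) (Fin n) ℝ) (v : EuclideanSpace ℝ (Fin n)) :
    EuclideanSpace ℝ (Fin m) := WithLp.toLp 2 (fun i => ∑ j, A i j * v j)

/-- The square of the Frobenius norm `‖A‖_F²`. -/
def frobSq {m n : ℕ} (A : Matrix (Fin m) (Fin n) ℝ) : ℝ := ∑ i, ∑ j, (A i j) ^ 2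

/-- The operator norm `‖A‖` (ℓ² → ℓ²). -/
def opN {m n : ℕ} (A : Matrix (Fin m) (Fin n) ℝ) : ℝ :=
  ‖LinearMap.toContinuousLinearMap (Matrix.toEuclideanLin A)‖

/-- Orthogonal projection of `w` onto the hyperplane `{v : ⟨a_i, v⟩ = b_i}`. -/
def proj {m n : ℕ} (A : Matrix (Fin m) (Fin n) ℝ) (b : EuclideanSpace ℝ (Fin m)) (i : Fin m)
    (w : EuclideanSpace ℝ (Fin n)) : EuclideanSpace ℝ (Fin n) :=
  w + ((b i - inner (𝕜 := ℝ) (rowv A i) w) / ‖rowv A i‖ ^ 2) • rowv A i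

/-- The Kaczmarz trajectory: `traj A b x0 ω j` is `x_j(ω) = π_{ω_j} ⋯ π_{ω_1} x_0`. -/
def traj {m n k : ℕ} (A : Matrix (Fin m) (Fin n) ℝ) (b : EuclideanSpace ℝ (Fin m))
    (x0 : EuclideanSpace ℝ (Fin n)) (ω : Fin k → Fin m) : ℕ → EuclideanSpace ℝ (Fin n)
  | 0 => x0
  | j + 1 => if h : j < k then proj A b (ω ⟨j, h⟩) (traj A b x0 ω j) else traj A b x0 ω j

/-- The weight `∏_j ‖a_{ω_j}‖²/‖A‖_F²` of an index sequence `ω` for the random Kaczmarz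
process. -/
def wt {m n k : ℕ} (A : Matrix (Fin m) (Fin n) ℝ) (ω : Fin k → Fin m) : ℝ :=
  ∏ j, ‖rowv A (ω j)‖ ^ 2 / frobSq A

end

/-! Projecting onto the hyperplane of row `t` removes `⟨a_t, w − x⟩² / ‖a_t‖²` from the squared
error `‖w − x‖²`, so averaging over `t` with the weights `‖a_t‖² / ‖A‖_F²` multiplies it by
`1 − (‖A w − b‖ / ‖w − x‖)² / ‖A‖_F²`: at most `1 − ε² / ‖A‖_F²` on the event
`‖A w − b‖ / ‖w − x‖ ≥ ε`, and at most `1` always. By Jensen's inequality for `log`, the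
conditional expectation of `log (‖x_{i+1} − x‖ / ‖x_i − x‖)` given the first `i` indices is at
most half the logarithm of this factor; as the weight is a product measure, conditioning on the
first `i` indices amounts to resampling the `i`-th one. The logarithm of `‖x_k − x‖ / ‖x_0 − x‖`
telescopes into these `k` one-step terms. -/

open Finset Function Real

theorem norm_sub_inner_div_smul_sq {E : Type*} [NormedAddCommGroup E] [InnerProductSpace ℝ E]
    (a v : E) :
    ‖v - (inner ℝ a v / ‖a‖ ^ 2) • a‖ ^ 2 = ‖v‖ ^ 2 - inner ℝ a v ^ 2 / ‖a‖ ^ 2 := by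
  rcases eq_or_ne a 0 with rfl | ha
  · simp
  have ha' : ‖a‖ ≠ 0 := norm_ne_zero_iff.mpr ha
  rw [norm_sub_sq_real, real_inner_smul_right, norm_smul, mul_pow, Real.norm_eq_abs, sq_abs,
    real_inner_comm]
  field_simp
  ring

theorem Real.sum_mul_log_le_log_sum_mul {ι : Type*} (s : Finset ι) {w r : ι → ℝ}
    (hw : ∀ i ∈ s, 0 ≤ w i) (hw₁ : ∑ i ∈ s, w i = 1) (hr : ∀ i ∈ s, 0 < r i) :
    ∑ i ∈ s, w i * log (r i) ≤ log (∑ i ∈ s, w i * r i) :=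
  strictConcaveOn_log_Ioi.concaveOn.le_map_sum hw hw₁ hr

theorem Real.log_div_eq_sum_range_log_div {f : ℕ → ℝ} {k : ℕ} (hf : ∀ j ≤ k, f j ≠ 0) :
    log (f k / f 0) = ∑ i ∈ range k, log (f (i + 1) / f i) := by
  rw [log_div (hf k le_rfl) (hf 0 k.zero_le), ← sum_range_sub (fun j => log (f j))]
  refine sum_congr rfl fun i hi => ?_
  have hi : i < k := mem_range.mp hi
  exact (log_div (hf (i + 1) hi) (hf i hi.le)).symm

theorem prod_comp_update_mul {ι α R : Type*} [Fintype ι] [DecidableEq ι] [CommMonoid R]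
    (p : α → R) (ω : ι → α) (i : ι) (t : α) :
    (∏ j, p (update ω i t j)) * p (ω i) = (∏ j, p (ω j)) * p t := by
  rw [Fintype.prod_eq_mul_prod_compl i, Fintype.prod_eq_mul_prod_compl i (fun j => p (ω j)),
    update_self]
  have : ∏ j ∈ {i}ᶜ, p (update ω i t j) = ∏ j ∈ {i}ᶜ, p (ω j) :=
    prod_congr rfl fun j hj => by rw [update_of_ne (by simpa using hj)]
  rw [this]
  ac_rfl

theorem sum_prod_mul_eq_sum_prod_mul_sum_update {ι α R : Type*} [Fintype ι] [DecidableEq ι]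
    [Fintype α] [CommSemiring R] (p : α → R) (hp : ∑ t, p t = 1) (i : ι) (F : (ι → α) → R) :
    ∑ ω, (∏ j, p (ω j)) * ∑ t, p t * F (update ω i t) = ∑ ω, (∏ j, p (ω j)) * F ω := by
  let σ : Equiv.Perm ((ι → α) × α) := Involutive.toPerm (fun q => (update q.1 i q.2, q.1 i))
    fun q => by simp
  have hσ : ∀ ω t, σ (ω, t) = (update ω i t, ω i) := fun _ _ => rfl
  calc ∑ ω, (∏ j, p (ω j)) * ∑ t, p t * F (update ω i t)
      = ∑ q : (ι → α) × α, (∏ j, p ((σ q).1 j)) * p (σ q).2 * F (σ q).1 := by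
        rw [Fintype.sum_prod_type]
        refine sum_congr rfl fun ω _ => ?_
        rw [mul_sum]
        refine sum_congr rfl fun t _ => ?_
        rw [hσ, prod_comp_update_mul]
        ring
    _ = ∑ q : (ι → α) × α, (∏ j, p (q.1 j)) * p q.2 * F q.1 :=
        Equiv.sum_comp σ fun q => (∏ j, p (q.1 j)) * p q.2 * F q.1
    _ = ∑ ω, (∏ j, p (ω j)) * F ω := by
        rw [Fintype.sum_prod_type]
        refine sum_congr rfl fun ω _ => ?_
        simp only [mul_right_comm _ _ (F ω), ← mul_sum, hp, mul_one]

noncomputable def rowProb {m n : ℕ} (A : Matrix (Fin m) (Fin n) ℝ) (t : Fin m) : ℝ :=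
  ‖rowv A t‖ ^ 2 / frobSq A

section Kaczmarz

variable {m n : ℕ} (A : Matrix (Fin m) (Fin n) ℝ)

theorem wt_eq_prod_rowProb {k : ℕ} (ω : Fin k → Fin m) : wt A ω = ∏ j, rowProb A (ω j) := rfl

theorem inner_rowv (i : Fin m) (v : EuclideanSpace ℝ (Fin n)) :
    inner ℝ (rowv A i) v = mulV A v i := by
  simp [PiLp.inner_apply, rowv, mulV, mul_comm]

theorem frobSq_eq_sum_norm_rowv_sq : frobSq A = ∑ i, ‖rowv A i‖ ^ 2 := by
  simp [frobSq, EuclideanSpace.real_norm_sq_eq, rowv]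

theorem frobSq_pos [Nonempty (Fin m)] (hrows : ∀ i, rowv A i ≠ 0) : 0 < frobSq A := by
  rw [frobSq_eq_sum_norm_rowv_sq]
  exact sum_pos (fun i _ => pow_pos (norm_pos_iff.mpr (hrows i)) 2) univ_nonempty

theorem rowProb_nonneg (t : Fin m) : 0 ≤ rowProb A t :=
  div_nonneg (sq_nonneg _) (sum_nonneg fun _ _ => sum_nonneg fun _ _ => sq_nonneg _)

theorem sum_rowProb (hF : frobSq A ≠ 0) : ∑ t, rowProb A t = 1 := by
  simp only [rowProb]
  rw [← sum_div, ← frobSq_eq_sum_norm_rowv_sq, div_self hF]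

variable {A} {b : EuclideanSpace ℝ (Fin m)} {x : EuclideanSpace ℝ (Fin n)}

theorem inner_rowv_sub (hAx : mulV A x = b) (i : Fin m) (z : EuclideanSpace ℝ (Fin n)) :
    inner ℝ (rowv A i) (z - x) = (mulV A z - b) i := by
  rw [inner_sub_right, inner_rowv, inner_rowv, hAx]; rfl

theorem proj_sub (hAx : mulV A x = b) (i : Fin m) (w : EuclideanSpace ℝ (Fin n)) :
    proj A b i w - x =
      (w - x) - (inner ℝ (rowv A i) (w - x) / ‖rowv A i‖ ^ 2) • rowv A i := by
  rw [proj, ← hAx, ← inner_rowv, inner_sub_right, ← neg_sub (inner ℝ (rowv A i) w), neg_div,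
    neg_smul]
  abel

theorem norm_proj_sub_sq (hAx : mulV A x = b) (i : Fin m) (w : EuclideanSpace ℝ (Fin n)) :
    ‖proj A b i w - x‖ ^ 2 = ‖w - x‖ ^ 2 - inner ℝ (rowv A i) (w - x) ^ 2 / ‖rowv A i‖ ^ 2 := by
  rw [proj_sub hAx, norm_sub_inner_div_smul_sq]

theorem sum_rowProb_mul_norm_proj_sub_sq (hAx : mulV A x = b) (hF : frobSq A ≠ 0)
    (z : EuclideanSpace ℝ (Fin n)) :
    ∑ t, rowProb A t * ‖proj A b t z - x‖ ^ 2 = ‖z - x‖ ^ 2 - ‖mulV A z - b‖ ^ 2 / frobSq A := by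
  have hterm : ∀ t, rowProb A t * ‖proj A b t z - x‖ ^ 2
      = rowProb A t * ‖z - x‖ ^ 2 - (mulV A z - b) t ^ 2 / frobSq A := by
    intro t
    rw [norm_proj_sub_sq hAx, rowProb, ← inner_rowv_sub hAx]
    rcases eq_or_ne (rowv A t) 0 with h | h
    · simp [h]
    · have : ‖rowv A t‖ ≠ 0 := norm_ne_zero_iff.mpr h
      field_simp
  rw [sum_congr rfl fun t _ => hterm t, sum_sub_distrib, ← sum_mul, sum_rowProb A hF, one_mul,
    ← sum_div, ← EuclideanSpace.real_norm_sq_eq]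

theorem log_one_sub_sq_div_le {F ε ρ : ℝ} (hF : 0 ≤ F) (hε : 0 ≤ ε) (hρ : 0 < 1 - ρ ^ 2 / F) :
    log (1 - ρ ^ 2 / F) ≤ log (1 - ε ^ 2 / F) * (if ε ≤ ρ then 1 else 0) := by
  split_ifs with h
  · rw [mul_one]
    have : ε ^ 2 / F ≤ ρ ^ 2 / F := div_le_div_of_nonneg_right (pow_le_pow_left₀ hε h 2) hF
    exact log_le_log hρ (by linarith)
  · rw [mul_zero]
    exact log_nonpos hρ.le (by have := div_nonneg (sq_nonneg ρ) hF; linarith)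

theorem sum_rowProb_mul_log_le [Nonempty (Fin m)] (hAx : mulV A x = b)
    (hrows : ∀ i, rowv A i ≠ 0) {ε : ℝ} (hε : 0 ≤ ε) {z : EuclideanSpace ℝ (Fin n)} (hz : z ≠ x)
    (hproj : ∀ t, proj A b t z ≠ x) :
    ∑ t, rowProb A t * log (‖proj A b t z - x‖ / ‖z - x‖) ≤
      (1 / 2) * log (1 - ε ^ 2 / frobSq A) *
        (if ε ≤ ‖mulV A z - b‖ / ‖z - x‖ then 1 else 0) := by
  have hF := frobSq_pos A hrows
  have hzx : ‖z - x‖ ≠ 0 := norm_ne_zero_iff.mpr (sub_ne_zero.mpr hz)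
  set q : Fin m → ℝ := fun t => ‖proj A b t z - x‖ / ‖z - x‖
  have hq : ∀ t, 0 < q t := fun t =>
    div_pos (norm_pos_iff.mpr (sub_ne_zero.mpr (hproj t))) (norm_pos_iff.mpr (sub_ne_zero.mpr hz))
  have hmean : ∑ t, rowProb A t * q t ^ 2 = 1 - (‖mulV A z - b‖ / ‖z - x‖) ^ 2 / frobSq A := by
    simp only [q, div_pow, mul_div_assoc', ← sum_div, sum_rowProb_mul_norm_proj_sub_sq hAx hF.ne']
    field_simp
  have hmean_pos : 0 < ∑ t, rowProb A t * q t ^ 2 :=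
    sum_pos (fun t _ => mul_pos (div_pos (pow_pos (norm_pos_iff.mpr (hrows t)) 2) hF)
      (pow_pos (hq t) 2)) univ_nonempty
  calc ∑ t, rowProb A t * log (q t) = (1 / 2) * ∑ t, rowProb A t * log (q t ^ 2) := by
        simp only [log_pow, mul_sum]
        refine sum_congr rfl fun t _ => ?_
        push_cast; ring
    _ ≤ (1 / 2) * log (∑ t, rowProb A t * q t ^ 2) := by
        gcongr
        exact sum_mul_log_le_log_sum_mul _ (fun t _ => rowProb_nonneg A t)
          (sum_rowProb A hF.ne') fun t _ => pow_pos (hq t) 2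
    _ ≤ _ := by
        rw [mul_assoc]
        gcongr
        rw [hmean] at hmean_pos ⊢
        exact log_one_sub_sq_div_le hF.le hε hmean_pos

end Kaczmarz

section Trajectory

variable {m n k : ℕ} {A : Matrix (Fin m) (Fin n) ℝ} {b : EuclideanSpace ℝ (Fin m)}
  {x0 : EuclideanSpace ℝ (Fin n)}

theorem traj_succ (ω : Fin k → Fin m) (i : Fin k) :
    traj A b x0 ω (i + 1) = proj A b (ω i) (traj A b x0 ω i) := by
  simp [traj]

theorem traj_congr {ω ω' : Fin k → Fin m} {j : ℕ} (h : ∀ l : Fin k, (l : ℕ) < j → ω l = ω' l) :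
    traj A b x0 ω j = traj A b x0 ω' j := by
  induction j with
  | zero => rfl
  | succ j ih =>
    rw [traj, traj, ih fun l hl => h l (Nat.lt_succ_of_lt hl)]
    split_ifs with hj
    · rw [h ⟨j, hj⟩ (Nat.lt_succ_self j)]
    · rfl

theorem traj_update_self (ω : Fin k → Fin m) (i : Fin k) (t : Fin m) :
    traj A b x0 (update ω i t) i = traj A b x0 ω i :=
  traj_congr fun _ hl => update_of_ne (Fin.ne_of_lt hl) t ω

theorem sum_wt_mul_log_succ_le {x : EuclideanSpace ℝ (Fin n)} (hAx : mulV A x = b)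
    (hrows : ∀ i, rowv A i ≠ 0) {ε : ℝ} (hε : 0 ≤ ε)
    (hne : ∀ ω : Fin k → Fin m, ∀ j ≤ k, traj A b x0 ω j ≠ x) {i : ℕ} (hi : i < k) :
    ∑ ω : Fin k → Fin m, wt A ω * log (‖traj A b x0 ω (i + 1) - x‖ / ‖traj A b x0 ω i - x‖) ≤
      (1 / 2) * log (1 - ε ^ 2 / frobSq A) *
        ∑ ω : Fin k → Fin m, wt A ω *
          (if ε ≤ ‖mulV A (traj A b x0 ω i) - b‖ / ‖traj A b x0 ω i - x‖ then 1 else 0) := by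
  let ι : Fin k := ⟨i, hi⟩
  rcases isEmpty_or_nonempty (Fin m) with hm | hm
  · have : IsEmpty (Fin k → Fin m) := ⟨fun ω => hm.false (ω ι)⟩
    simp
  have hupdate : ∀ ω t, traj A b x0 (update ω ι t) (i + 1) = proj A b t (traj A b x0 ω i) :=
    fun ω t => by rw [traj_succ (update ω ι t) ι, update_self, traj_update_self]
  have hupdate₀ : ∀ ω t, traj A b x0 (update ω ι t) i = traj A b x0 ω i :=
    fun ω t => traj_update_self ω ι t
  calc ∑ ω : Fin k → Fin m, wt A ω * log (‖traj A b x0 ω (i + 1) - x‖ / ‖traj A b x0 ω i - x‖)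
      = ∑ ω : Fin k → Fin m, wt A ω * ∑ t, rowProb A t *
          log (‖proj A b t (traj A b x0 ω i) - x‖ / ‖traj A b x0 ω i - x‖) := by
        simp only [wt_eq_prod_rowProb]
        refine (sum_prod_mul_eq_sum_prod_mul_sum_update _ (sum_rowProb A (frobSq_pos A hrows).ne')
          ι fun ω => log (‖traj A b x0 ω (i + 1) - x‖ / ‖traj A b x0 ω i - x‖)).symm.trans ?_
        simp only [hupdate, hupdate₀]
    _ ≤ ∑ ω : Fin k → Fin m, wt A ω * ((1 / 2) * log (1 - ε ^ 2 / frobSq A) *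
          (if ε ≤ ‖mulV A (traj A b x0 ω i) - b‖ / ‖traj A b x0 ω i - x‖ then 1 else 0)) := by
        refine sum_le_sum fun ω _ => mul_le_mul_of_nonneg_left ?_ ?_
        · refine sum_rowProb_mul_log_le hAx hrows hε (hne ω i hi.le) fun t => ?_
          rw [← hupdate]
          exact hne _ (i + 1) hi
        · exact prod_nonneg fun j _ => rowProb_nonneg A (ω j)
    _ = _ := by rw [mul_sum]; exact sum_congr rfl fun ω _ => by ring

end Trajectory

open Finset in
theorem decay_estimate_general {m n : ℕ} (A : Matrix (Fin m) (Fin n) ℝ) (hrows : ∀ i, rowv A i ≠ 0)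
    (x : EuclideanSpace ℝ (Fin n)) (b : EuclideanSpace ℝ (Fin m)) (hAx : mulV A x = b)
    (x0 : EuclideanSpace ℝ (Fin n)) (k : ℕ) (ε : ℝ) (hε : 0 < ε)
    (hne : ∀ ω : Fin k → Fin m, ∀ j ≤ k, traj A b x0 ω j ≠ x) :
    ∑ ω : Fin k → Fin m, wt A ω * Real.log (‖traj A b x0 ω k - x‖ / ‖x0 - x‖) ≤
      ((k : ℝ) / 2) * Real.log (1 - ε ^ 2 / frobSq A) *
        ((1 / (k : ℝ)) * ∑ i ∈ range k, ∑ ω : Fin k → Fin m,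
          wt A ω * (if ε ≤ ‖mulV A (traj A b x0 ω i) - b‖ / ‖traj A b x0 ω i - x‖
            then (1 : ℝ) else 0)) := by
  have htelescope : ∀ ω : Fin k → Fin m, log (‖traj A b x0 ω k - x‖ / ‖x0 - x‖) =
      ∑ i ∈ range k, log (‖traj A b x0 ω (i + 1) - x‖ / ‖traj A b x0 ω i - x‖) := fun ω =>
    log_div_eq_sum_range_log_div fun j hj => norm_ne_zero_iff.mpr (sub_ne_zero.mpr (hne ω j hj))
  calc ∑ ω : Fin k → Fin m, wt A ω * log (‖traj A b x0 ω k - x‖ / ‖x0 - x‖)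
      = ∑ i ∈ range k, ∑ ω : Fin k → Fin m,
          wt A ω * log (‖traj A b x0 ω (i + 1) - x‖ / ‖traj A b x0 ω i - x‖) := by
        simp only [htelescope, mul_sum]
        exact sum_comm
    _ ≤ ∑ i ∈ range k, (1 / 2) * log (1 - ε ^ 2 / frobSq A) * ∑ ω : Fin k → Fin m,
          wt A ω * (if ε ≤ ‖mulV A (traj A b x0 ω i) - b‖ / ‖traj A b x0 ω i - x‖
            then (1 : ℝ) else 0) :=
        sum_le_sum fun i hi => sum_wt_mul_log_succ_le hAx hrows hε.le hne (mem_range.mp hi)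
    _ = _ := by
        rw [← mul_sum]
        rcases eq_or_ne k 0 with rfl | hk
        · simp
        · field_simp

open Finset in
/-- **Decay estimate for the random Kaczmarz process.** If no choice of at most `k`
projections starting from `x₀` gives the exact solution `x`, then
`E log(‖x_k − x‖/‖x₀ − x‖) ≤ (k/2) log(1 − ε²/‖A‖_F²) · (1/k) Σ_{i<k} P(‖Ax_i − b‖/‖x_i − x‖ ≥ ε)`,
where `E` and `P` are the weighted average over index sequences `ω ∈ {1,…,m}^k` with weight
`∏_j ‖a_{ω_j}‖²/‖A‖_F²`. -/
theorem decay_estimate {m n : ℕ} (A : Matrix (Fin m) (Fin n) ℝ) (hmn : m ≥ n)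
    (hrank : A.rank = n) (hrows : ∀ i, rowv A i ≠ 0)
    (x : EuclideanSpace ℝ (Fin n)) (b : EuclideanSpace ℝ (Fin m)) (hAx : mulV A x = b)
    (x0 : EuclideanSpace ℝ (Fin n)) (k : ℕ) (ε : ℝ) (hε : 0 < ε)
    (hne : ∀ ω : Fin k → Fin m, ∀ j ≤ k, traj A b x0 ω j ≠ x) :
    ∑ ω : Fin k → Fin m, wt A ω * Real.log (‖traj A b x0 ω k - x‖ / ‖x0 - x‖) ≤
      ((k : ℝ) / 2) * Real.log (1 - ε ^ 2 / frobSq A) *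
        ((1 / (k : ℝ)) * ∑ i ∈ range k, ∑ ω : Fin k → Fin m,
          wt A ω * (if ε ≤ ‖mulV A (traj A b x0 ω i) - b‖ / ‖traj A b x0 ω i - x‖
            then (1 : ℝ) else 0)) :=
  decay_estimate_general A hrows x b hAx x0 k ε hε hne
end

section
/- Let A be a real m×n matrix and let ε > 0. Then there exist real m×n matrices A₁ and A₂ with A = A₁ + A₂, rank(A₁) ≤ ‖A‖_F²/ε², and ‖A₂‖ ≤ ε, where ‖A₂‖ is the operator norm. -/
/-! Instead of the singular value decomposition, peel off rank-one pieces greedily: while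
`‖A‖ > ε`, choose a unit vector `v` with `‖A v‖ > ε` and subtract `(A v) vᵀ`. This replaces every
row `r` of `A` by its projection `r - ⟨r, v⟩ v` onto `v^⊥`, so `‖A‖_F²` drops by exactly
`‖A v‖² > ε²`. Hence the number of pieces removed, which bounds the rank of their sum, is at most
`‖A‖_F² / ε²`. -/

noncomputable section

open Matrix

theorem Matrix.rank_add_le {m n K : Type*} [Fintype m] [Fintype n] [Field K] (A B : Matrix m n K) :
    (A + B).rank ≤ A.rank + B.rank := by
  rw [rank, rank, rank, mulVecLin_add]
  exact (Submodule.finrank_mono (LinearMap.range_add_le _ _)).trans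
    (Submodule.finrank_add_le_finrank_add_finrank _ _)

theorem EuclideanSpace.real_norm_sq_eq_dotProduct {ι : Type*} [Fintype ι]
    (x : EuclideanSpace ℝ ι) : ‖x‖ ^ 2 = x.ofLp ⬝ᵥ x.ofLp := by
  rw [← real_inner_self_eq_norm_sq, EuclideanSpace.inner_eq_star_dotProduct, star_trivial]

theorem dotProduct_self_sub_dotProduct_smul {n : Type*} [Fintype n] (r v : n → ℝ)
    (hv : v ⬝ᵥ v = 1) :
    (r - (r ⬝ᵥ v) • v) ⬝ᵥ (r - (r ⬝ᵥ v) • v) = r ⬝ᵥ r - (r ⬝ᵥ v) ^ 2 := by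
  simp only [sub_dotProduct, dotProduct_sub, smul_dotProduct, dotProduct_smul, hv,
    dotProduct_comm v r, smul_eq_mul]
  ring

theorem frobSq_eq_sum_dotProduct {m n : ℕ} (A : Matrix (Fin m) (Fin n) ℝ) :
    frobSq A = ∑ i, A i ⬝ᵥ A i := by
  simp only [frobSq, dotProduct, sq]

theorem frobSq_nonneg {m n : ℕ} (A : Matrix (Fin m) (Fin n) ℝ) : 0 ≤ frobSq A := by
  unfold frobSq; positivity

theorem frobSq_sub_vecMulVec_mulVec {m n : ℕ} (A : Matrix (Fin m) (Fin n) ℝ) {v : Fin n → ℝ}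
    (hv : v ⬝ᵥ v = 1) :
    frobSq (A - vecMulVec (A *ᵥ v) v) = frobSq A - A *ᵥ v ⬝ᵥ A *ᵥ v := by
  have hrow (i : Fin m) : (A - vecMulVec (A *ᵥ v) v) i = A i - (A i ⬝ᵥ v) • v := by
    ext j; simp [vecMulVec_apply, mulVec]
  simp only [frobSq_eq_sum_dotProduct, hrow, dotProduct_self_sub_dotProduct_smul _ _ hv,
    Finset.sum_sub_distrib]
  simp [dotProduct, mulVec, sq]

theorem exists_unit_lt_mulVec_of_lt_opN {m n : ℕ} {A : Matrix (Fin m) (Fin n) ℝ} {ε : ℝ}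
    (hε : 0 ≤ ε) (h : ε < opN A) :
    ∃ v : Fin n → ℝ, v ⬝ᵥ v = 1 ∧ ε ^ 2 < A *ᵥ v ⬝ᵥ A *ᵥ v := by
  lift ε to NNReal using hε
  obtain ⟨x, hx, hlt⟩ := (LinearMap.toContinuousLinearMap (toEuclideanLin A)
    ).exists_nnnorm_eq_one_lt_apply_of_lt_opNNNorm (r := ε) (by exact_mod_cast h)
  refine ⟨x.ofLp, ?_, ?_⟩
  · rw [← EuclideanSpace.real_norm_sq_eq_dotProduct, ← coe_nnnorm, hx]; simp
  · have : (ε : ℝ) < ‖toEuclideanLin A x‖ := by exact_mod_cast hlt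
    calc (ε : ℝ) ^ 2 < ‖toEuclideanLin A x‖ ^ 2 := by gcongr
      _ = A *ᵥ x.ofLp ⬝ᵥ A *ᵥ x.ofLp := EuclideanSpace.real_norm_sq_eq_dotProduct _

theorem exists_rank_le_one_frobSq_sub_lt {m n : ℕ} {A : Matrix (Fin m) (Fin n) ℝ} {ε : ℝ}
    (hε : 0 ≤ ε) (h : ε < opN A) :
    ∃ R : Matrix (Fin m) (Fin n) ℝ, R.rank ≤ 1 ∧ frobSq (A - R) < frobSq A - ε ^ 2 := by
  obtain ⟨v, hv, hlt⟩ := exists_unit_lt_mulVec_of_lt_opN hε h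
  refine ⟨vecMulVec (A *ᵥ v) v, rank_vecMulVec_le _ _, ?_⟩
  rw [frobSq_sub_vecMulVec_mulVec A hv]
  linarith

theorem exists_lowRank_add_small_of_frobSq_lt {m n : ℕ} {ε : ℝ} (hε : 0 ≤ ε) (k : ℕ)
    (A : Matrix (Fin m) (Fin n) ℝ) (hA : frobSq A < k * ε ^ 2) :
    ∃ A₁ A₂ : Matrix (Fin m) (Fin n) ℝ,
      A = A₁ + A₂ ∧ A₁.rank * ε ^ 2 ≤ frobSq A ∧ opN A₂ ≤ ε := by
  induction k generalizing A with
  | zero => exact absurd (frobSq_nonneg A) (by simpa using hA)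
  | succ k ih =>
    by_cases hsmall : opN A ≤ ε
    · exact ⟨0, A, (zero_add A).symm, by simpa using frobSq_nonneg A, hsmall⟩
    obtain ⟨R, hR, hdrop⟩ := exists_rank_le_one_frobSq_sub_lt hε (not_le.1 hsmall)
    obtain ⟨B₁, B₂, hB, hrank, hop⟩ := ih (A - R) (by push_cast at hA; linarith)
    refine ⟨R + B₁, B₂, by rw [add_assoc, ← hB, add_sub_cancel], ?_, hop⟩
    have hadd : ((R + B₁).rank : ℝ) ≤ 1 + B₁.rank := by
      exact_mod_cast (rank_add_le R B₁).trans (by omega)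
    calc ((R + B₁).rank : ℝ) * ε ^ 2 ≤ (1 + B₁.rank) * ε ^ 2 := by gcongr
      _ ≤ frobSq A := by linarith

/-- **Low-rank plus small decomposition.** For every `ε > 0` one can write `A = A₁ + A₂`
with `rank A₁ ≤ ‖A‖_F²/ε²` and operator norm `‖A₂‖ ≤ ε`. -/
theorem low_rank_plus_small {m n : ℕ} (A : Matrix (Fin m) (Fin n) ℝ) (ε : ℝ) (hε : 0 < ε) :
    ∃ A₁ A₂ : Matrix (Fin m) (Fin n) ℝ,
      A = A₁ + A₂ ∧ (A₁.rank : ℝ) ≤ frobSq A / ε ^ 2 ∧ opN A₂ ≤ ε := by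
  have hε2 : 0 < ε ^ 2 := by positivity
  have hA : frobSq A < (⌊frobSq A / ε ^ 2⌋₊ + 1 : ℕ) * ε ^ 2 := by
    push_cast
    exact (div_lt_iff₀ hε2).1 (Nat.lt_floor_add_one _)
  obtain ⟨A₁, A₂, hsum, hrank, hop⟩ := exists_lowRank_add_small_of_frobSq_lt hε.le _ A hA
  exact ⟨A₁, A₂, hsum, (le_div_iff₀ hε2).2 hrank, hop⟩
end
end
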